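/- For n ≥ 3, the number R(n) of square occurrences (repetitions counted) in the Fibonacci word f_n satisfies 5·R(n) = 4nF(n) − 2(n+6)F(n−1) − 20F(n−2) + 5(n+1); equivalently, R(n) = (4/5)nF(n) − (2/5)(n+6)F(n−1) − 4F(n−2) + n + 1. -/

import Mathlib

/-- Fibonacci numbers: F(0)=1, F(1)=1, F(n+2)=F(n+1)+F(n). -/
def F : ℕ → ℕ
  | 0 => 1
  | 1 => 1
  | n + 2 => F (n + 1) + F n

/-- Finite Fibonacci words over {a,b} coded as Fin 2 (a=0, b=1). -/
def fibWord : ℕ → List (Fin 2)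
  | 0 => [0]
  | 1 => [1]
  | n + 2 => fibWord (n + 1) ++ fibWord n

/-- R(n): number of square occurrences (repetitions counted) in f_n: pairs (i,l) with
l ≥ 1, i+2l ≤ |f_n|, and the length-l factor at position i equal to the one at i+l. -/
noncomputable def R (n : ℕ) : ℕ :=
  {p : ℕ × ℕ | 1 ≤ p.2 ∧ p.1 + 2 * p.2 ≤ (fibWord n).length ∧
    ∀ t < p.2, (fibWord n).getD (p.1 + t) 0 = (fibWord n).getD (p.1 + p.2 + t) 0}.ncard

/-!
Cut the infinite Fibonacci word `s` into the blocks `f_{k+1}` and `f_k` that the substitution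
`1 ↦ f_{k+1}`, `0 ↦ f_k` assigns to the letters of `s` itself. Every such block begins with
`f_{k+1}`; call the position right after this prefix a prefix end of level `k + 1`. Since
`F (k + 2) = F (k + 1) + F k`, the letters `s j` and `s (j + F (k + 2))` differ iff exactly one of
the comparisons through `s (j + F (k + 1))` fails, and an induction on `k` shows that
`s j ≠ s (j + F k)` exactly when `j + 1` or `j + 2` is a prefix end of level `k + 1`.

Consequently the period of every square is a Fibonacci number: if `F K < F K + m < F (K + 1)`, a
square of period `F K + m` turns the mismatches at distance `m` inside it (found by induction on
the period if `m` is not a Fibonacci number, and from the description above otherwise) into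
mismatches at distance `F K`, which are too sparse, or for `m = F (K - 2)` misplaced. And a window
of length `F k` contains a mismatch at distance `F k` iff it is hit by a prefix end; in `f_n` there
are `F (n - k - 1)` of them, with gaps larger than `F k`, so the bad windows form disjoint runs of
length `F k + 1`, except for a last run cut off by the end of the word. Summing over `k` leaves the
convolution `∑ F (n - 1 - k) F k`, which satisfies a Fibonacci-type recursion.
-/

namespace FibonacciSquares

open Finset

section FibonacciNumbers

lemma F_add_two (n : ℕ) : F (n + 2) = F (n + 1) + F n := rfl

lemma F_eq_fib (n : ℕ) : F n = Nat.fib (n + 1) := by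
  induction n using Nat.twoStepInduction with
  | zero => rfl
  | one => rfl
  | more n ih₁ ih₂ => rw [F_add_two, ih₁, ih₂, Nat.fib_add_two (n := n + 1)]; ring

lemma F_pos (n : ℕ) : 0 < F n := by
  rw [F_eq_fib]; exact Nat.fib_pos.mpr n.succ_pos

lemma F_mono : Monotone F := fun _ _ h => by
  simp only [F_eq_fib]; exact Nat.fib_mono (by omega)

lemma F_lt_F {a b : ℕ} (ha : 1 ≤ a) (hab : a < b) : F a < F b := by
  simp only [F_eq_fib]; exact (Nat.fib_lt_fib (by omega)).mpr (by omega)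

lemma eq_of_F_eq {a b : ℕ} (ha : 1 ≤ a) (hb : 1 ≤ b) (h : F a = F b) : a = b := by
  by_contra hne
  rcases Nat.lt_or_gt_of_ne hne with hab | hab
  · exact (F_lt_F ha hab).ne h
  · exact (F_lt_F hb hab).ne' h

lemma two_le_F {n : ℕ} (hn : 2 ≤ n) : 2 ≤ F n := F_mono hn

lemma F_eq_add_of_two_le (n : ℕ) (hn : 2 ≤ n) : F n = F (n - 1) + F (n - 2) := by
  obtain ⟨p, rfl⟩ : ∃ p, n = p + 2 := ⟨n - 2, by omega⟩
  rfl

lemma exists_F_le_lt_F_succ {l : ℕ} (hl : 1 ≤ l) : ∃ K, F K ≤ l ∧ l < F (K + 1) := by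
  have hg : 2 ≤ Nat.greatestFib l := Nat.le_greatestFib.mpr (by simpa using hl)
  refine ⟨Nat.greatestFib l - 1, ?_, ?_⟩
  · rw [F_eq_fib, Nat.sub_add_cancel (by omega)]; exact Nat.fib_greatestFib_le l
  · rw [F_eq_fib, show Nat.greatestFib l - 1 + 1 + 1 = Nat.greatestFib l + 1 by omega]
    exact Nat.lt_fib_greatestFib_add_one l

lemma F_succ_le_two_mul (n : ℕ) : F (n + 1) ≤ 2 * F n := by
  cases n with
  | zero => decide
  | succ n => rw [F_add_two]; have : F n ≤ F (n + 1) := F_mono (by omega); omega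

lemma exists_one_le_F_eq {l : ℕ} (h : ∃ a, F a = l) : ∃ a, 1 ≤ a ∧ F a = l := by
  obtain ⟨a, rfl⟩ := h
  rcases Nat.eq_zero_or_pos a with rfl | ha
  exacts [⟨1, le_rfl, rfl⟩, ⟨a, ha, rfl⟩]

lemma two_mul_F_le_iff {n k : ℕ} (hn : 3 ≤ n) : 2 * F k ≤ F n ↔ k ≤ n - 2 := by
  have hsplit := F_eq_add_of_two_le n (by omega)
  have hlt : F (n - 2) < F (n - 1) := F_lt_F (by omega) (by omega)
  constructor
  · intro h
    by_contra hk
    have : F (n - 1) ≤ F k := F_mono (by omega)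
    omega
  · intro hk
    have : F k ≤ F (n - 2) := F_mono hk
    omega

end FibonacciNumbers

section FibonacciWords

lemma fibWord_add_two (n : ℕ) : fibWord (n + 2) = fibWord (n + 1) ++ fibWord n := rfl

lemma length_fibWord (n : ℕ) : (fibWord n).length = F n := by
  induction n using Nat.twoStepInduction with
  | zero => rfl
  | one => rfl
  | more n ih₁ ih₂ => rw [fibWord_add_two, List.length_append, ih₁, ih₂, F_add_two]

lemma fibWord_prefix_of_le {a b : ℕ} (ha : 1 ≤ a) (hab : a ≤ b) :
    fibWord a <+: fibWord b := by
  induction b, hab using Nat.le_induction with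
  | base => exact List.prefix_refl _
  | succ b hab ih =>
    obtain ⟨b, rfl⟩ : ∃ b', b = b' + 1 := ⟨b - 1, by omega⟩
    exact ih.trans ⟨fibWord b, rfl⟩

/-- The infinite Fibonacci word: all `fibWord n` with `n ≥ 1` are prefixes of it
(`fibWord 0 = [0]` is not). -/
def fibSeq (j : ℕ) : Fin 2 := (fibWord (j + 1)).getD j 0

lemma lt_F_succ (j : ℕ) : j < F (j + 1) := by
  induction j with
  | zero => exact F_pos 1
  | succ j ih => rw [F_add_two]; have := F_pos j; omega

lemma getD_fibWord {n j : ℕ} (hn : 1 ≤ n) (hj : j < F n) : (fibWord n).getD j 0 = fibSeq j := by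
  have hprefix {a b : ℕ} (ha : 1 ≤ a) (hab : a ≤ b) (hj : j < F a) :
      (fibWord b).getD j 0 = (fibWord a).getD j 0 := by
    obtain ⟨t, ht⟩ := fibWord_prefix_of_le ha hab
    rw [← ht, List.getD_append _ _ _ _ (by rwa [length_fibWord])]
  rcases le_total n (j + 1) with h | h
  · exact (hprefix hn h hj).symm
  · exact hprefix (by omega) h (lt_F_succ j)

lemma fibSeq_F_add {m c : ℕ} (hm : 1 ≤ m) (hc : c < F m) :
    fibSeq (F (m + 1) + c) = fibSeq c := by
  rw [← getD_fibWord (n := m + 2) (by omega) (by rw [F_add_two]; omega), fibWord_add_two,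
    List.getD_append_right _ _ _ _ (by rw [length_fibWord]; omega), length_fibWord,
    Nat.add_sub_cancel_left, getD_fibWord hm hc]

lemma fibSeq_F_sub_one {m : ℕ} (hm : 1 ≤ m) : fibSeq (F m - 1) = if Even m then 0 else 1 := by
  induction m using Nat.twoStepInduction with
  | zero => omega
  | one => rfl
  | more m ih₁ _ =>
    rcases Nat.eq_zero_or_pos m with rfl | hm
    · rfl
    · have := F_pos m
      rw [show F (m + 2) - 1 = F (m + 1) + (F m - 1) by rw [F_add_two]; omega,
        fibSeq_F_add hm (by omega), ih₁ hm]
      simp [Nat.even_add]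

lemma fibSeq_F_sub_two {m : ℕ} (hm : 2 ≤ m) : fibSeq (F m - 2) = if Even m then 1 else 0 := by
  induction m using Nat.twoStepInduction with
  | zero => omega
  | one => omega
  | more m ih₁ _ =>
    rcases Nat.lt_or_ge m 2 with hm | hm
    · interval_cases m <;> rfl
    · have := two_le_F hm
      rw [show F (m + 2) - 2 = F (m + 1) + (F m - 2) by rw [F_add_two]; omega,
        fibSeq_F_add (by omega) (by omega), ih₁ hm]
      simp [Nat.even_add]

end FibonacciWords

section Blocks

def fibBlock (k : ℕ) (c : Fin 2) : List (Fin 2) := if c = 1 then fibWord (k + 1) else fibWord k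

lemma flatMap_fibBlock_fibWord (m k : ℕ) :
    (fibWord m).flatMap (fibBlock k) = fibWord (m + k) := by
  induction m using Nat.twoStepInduction with
  | zero => simp [fibWord, fibBlock]
  | one => simp [fibWord, fibBlock, Nat.add_comm]
  | more n ih₁ ih₂ =>
    rw [fibWord_add_two, List.flatMap_append, ih₁, ih₂, show n + 2 + k = n + k + 2 by omega,
      fibWord_add_two, Nat.add_right_comm]

lemma flatMap_fibBlock_fibBlock (a b : ℕ) (c : Fin 2) :
    (fibBlock b c).flatMap (fibBlock a) = fibBlock (a + b) c := by
  by_cases hc : c = 1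
  · simp only [fibBlock, hc, if_true, flatMap_fibBlock_fibWord, Nat.add_comm, Nat.add_assoc]
  · simp only [fibBlock, hc, if_false, flatMap_fibBlock_fibWord, Nat.add_comm]

lemma length_fibBlock (k : ℕ) (c : Fin 2) :
    (fibBlock k c).length = if c = 1 then F (k + 1) else F k := by
  unfold fibBlock; split_ifs <;> rw [length_fibWord]

lemma one_zero_prefix_fibBlock {k : ℕ} (hk : 2 ≤ k) (c : Fin 2) : [1, 0] <+: fibBlock k c := by
  unfold fibBlock
  split_ifs
  · exact fibWord_prefix_of_le (a := 2) (by omega) (by omega)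
  · exact fibWord_prefix_of_le (a := 2) (by omega) hk

def blockLen (k r : ℕ) : ℕ := (fibBlock k (fibSeq r)).length

/-- `fibSeq` is the concatenation of the blocks `fibBlock k (fibSeq r)`, `r = 0, 1, …`, and the
`r`-th of them starts at `blockStart k r`. -/
def blockStart (k r : ℕ) : ℕ := ∑ i ∈ range r, blockLen k i

lemma F_le_blockLen (k r : ℕ) : F k ≤ blockLen k r := by
  unfold blockLen; rw [length_fibBlock]; split_ifs
  exacts [F_mono k.le_succ, le_rfl]

lemma blockLen_le (k r : ℕ) : blockLen k r ≤ F (k + 1) := by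
  unfold blockLen; rw [length_fibBlock]; split_ifs
  exacts [le_rfl, F_mono k.le_succ]

lemma blockStart_zero (k : ℕ) : blockStart k 0 = 0 := rfl

lemma blockStart_succ (k r : ℕ) : blockStart k (r + 1) = blockStart k r + blockLen k r :=
  sum_range_succ _ _

lemma blockStart_strictMono (k : ℕ) : StrictMono (blockStart k) :=
  strictMono_nat_of_lt_succ fun r => by
    rw [blockStart_succ]; have := F_le_blockLen k r; have := F_pos k; omega

lemma blockStart_add_F_le (k : ℕ) {a b : ℕ} (hab : a < b) :
    blockStart k a + F k ≤ blockStart k b := by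
  calc blockStart k a + F k ≤ blockStart k (a + 1) := by
        rw [blockStart_succ]; have := F_le_blockLen k a; omega
    _ ≤ blockStart k b := (blockStart_strictMono k).monotone hab

lemma length_flatMap_take_fibWord {N : ℕ} (k : ℕ) (hN : 1 ≤ N) {r : ℕ} (hr : r ≤ F N) :
    (((fibWord N).take r).flatMap (fibBlock k)).length = blockStart k r := by
  induction r with
  | zero => simp [blockStart_zero]
  | succ r ih =>
    have hr' : r < (fibWord N).length := by rw [length_fibWord]; omega
    have hget : (fibWord N)[r] = fibSeq r := by
      rw [← List.getD_eq_getElem _ 0 hr', getD_fibWord hN (by omega)]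
    rw [List.take_add_one, List.getElem?_eq_getElem hr', hget, List.flatMap_append,
      List.length_append, ih (by omega), blockStart_succ]
    simp [blockLen]

lemma blockStart_F (k : ℕ) {m : ℕ} (hm : 1 ≤ m) : blockStart k (F m) = F (m + k) := by
  rw [← length_flatMap_take_fibWord k hm le_rfl, List.take_of_length_le (by rw [length_fibWord]),
    flatMap_fibBlock_fibWord, length_fibWord]

lemma blockStart_le_F {k m r : ℕ} (hm : 1 ≤ m) (hr : r ≤ F m) :
    blockStart k r ≤ F (m + k) :=
  blockStart_F k hm ▸ (blockStart_strictMono k).monotone hr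

lemma flatMap_take_fibWord {N : ℕ} (k : ℕ) (hN : 1 ≤ N) {r : ℕ} (hr : r ≤ F N) :
    ((fibWord N).take r).flatMap (fibBlock k) = (fibWord (N + k)).take (blockStart k r) := by
  have hpre : ((fibWord N).take r).flatMap (fibBlock k) <+: fibWord (N + k) := by
    rw [← flatMap_fibBlock_fibWord N k, ← List.take_append_drop r (fibWord N),
      List.flatMap_append, List.take_append_drop]
    exact List.prefix_append _ _
  rw [List.prefix_iff_eq_take.mp hpre, length_flatMap_take_fibWord k hN hr]

lemma blockStart_blockStart (a b r : ℕ) :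
    blockStart a (blockStart b r) = blockStart (a + b) r := by
  have hr : r ≤ F (r + 1) := (lt_F_succ r).le
  have hb : blockStart b r ≤ F (r + 1 + b) := blockStart_le_F (by omega) hr
  rw [← length_flatMap_take_fibWord (a + b) (by omega) hr,
    ← length_flatMap_take_fibWord a (by omega) hb, ← flatMap_take_fibWord b (by omega) hr,
    List.flatMap_assoc]
  simp only [flatMap_fibBlock_fibBlock]

end Blocks

section BlockDecomposition

lemma fibSeq_blockStart_add {k r c : ℕ} (hc : c < blockLen k r) :
    fibSeq (blockStart k r + c) = (fibBlock k (fibSeq r)).getD c 0 := by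
  set N := r + 1
  have hrN : r < (fibWord N).length := by rw [length_fibWord]; exact lt_F_succ r
  have hget : (fibWord N)[r] = fibSeq r := by
    rw [← List.getD_eq_getElem _ 0 hrN, getD_fibWord (by omega) (lt_F_succ r)]
  have hsplit : fibWord (N + k) = ((fibWord N).take r).flatMap (fibBlock k) ++
      (fibBlock k (fibSeq r) ++ ((fibWord N).drop (r + 1)).flatMap (fibBlock k)) := by
    rw [← flatMap_fibBlock_fibWord]
    conv_lhs => rw [← List.take_append_drop r (fibWord N), List.drop_eq_getElem_cons hrN, hget]
    simp
  have hlen := length_flatMap_take_fibWord k (N := N) (by omega) (lt_F_succ r).le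
  have hend : blockStart k (r + 1) ≤ F (N + k) := blockStart_le_F (by omega) (lt_F_succ r)
  rw [blockStart_succ] at hend
  rw [← getD_fibWord (n := N + k) (by omega) (by omega), hsplit,
    List.getD_append_right _ _ _ _ (by omega), hlen, Nat.add_sub_cancel_left,
    List.getD_append _ _ _ _ hc]

/-- The next block starts with `10`. -/
lemma fibSeq_blockStart_add_of_lt_add_two {k r c : ℕ} (hk : 2 ≤ k) (hc : c < blockLen k r + 2) :
    fibSeq (blockStart k r + c) = (fibBlock k (fibSeq r) ++ [1, 0]).getD c 0 := by
  rcases Nat.lt_or_ge c (blockLen k r) with h | h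
  · rw [fibSeq_blockStart_add h, List.getD_append _ _ _ _ h]
  · obtain ⟨d, rfl⟩ : ∃ d, c = blockLen k r + d := ⟨c - blockLen k r, by omega⟩
    have hd : d < blockLen k (r + 1) := by
      have := F_le_blockLen k (r + 1); have := two_le_F hk; omega
    obtain ⟨t, ht⟩ := one_zero_prefix_fibBlock hk (fibSeq (r + 1))
    rw [← Nat.add_assoc, ← blockStart_succ, fibSeq_blockStart_add hd, ← ht,
      List.getD_append _ _ _ _ (by simp; omega),
      List.getD_append_right _ _ _ _ (by simp [blockLen]),
      show blockLen k r = (fibBlock k (fibSeq r)).length from rfl, Nat.add_sub_cancel_left]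

lemma exists_blockStart_add (k j : ℕ) : ∃ r c, c < blockLen k r ∧ j = blockStart k r + c := by
  induction j with
  | zero => exact ⟨0, 0, by have := F_le_blockLen k 0; have := F_pos k; omega, rfl⟩
  | succ j ih =>
    obtain ⟨r, c, hc, rfl⟩ := ih
    by_cases h : c + 1 < blockLen k r
    · exact ⟨r, c + 1, h, by omega⟩
    · refine ⟨r + 1, 0, ?_, ?_⟩
      · have := F_le_blockLen k (r + 1); have := F_pos k; omega
      · rw [blockStart_succ]; omega

lemma eq_of_blockStart_add_eq {k r r' c c' : ℕ} (hc : c < blockLen k r) (hc' : c' < blockLen k r')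
    (h : blockStart k r + c = blockStart k r' + c') : r = r' := by
  by_contra hne
  rcases Nat.lt_or_gt_of_ne hne with hlt | hlt
  · have := (blockStart_strictMono k).monotone (Nat.succ_le_of_lt hlt)
    rw [blockStart_succ] at this; omega
  · have := (blockStart_strictMono k).monotone (Nat.succ_le_of_lt hlt)
    rw [blockStart_succ] at this; omega

lemma exists_blockStart_add_iff {k r c d : ℕ} (hc : c < blockLen k r) (hd : d < F k) :
    (∃ r', blockStart k r + c = blockStart k r' + d) ↔ c = d := by
  constructor
  · rintro ⟨r', h⟩
    obtain rfl := eq_of_blockStart_add_eq hc (hd.trans_le (F_le_blockLen k r')) h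
    omega
  · rintro rfl; exact ⟨r, rfl⟩

lemma fibSeq_eq_one_iff (z : ℕ) : fibSeq z = 1 ↔ ∃ r, z = blockStart 1 r := by
  obtain ⟨r, c, hc, rfl⟩ := exists_blockStart_add 1 z
  have hstart := exists_blockStart_add_iff hc (d := 0) (F_pos 1)
  simp only [Nat.add_zero] at hstart
  rw [hstart, fibSeq_blockStart_add hc]
  have hletters :
      ∀ x : Fin 2, ∀ c < (fibBlock 1 x).length, (fibBlock 1 x).getD c 0 = 1 ↔ c = 0 := by
    decide
  exact hletters _ c hc

lemma fibSeq_eq_zero_iff (z : ℕ) : fibSeq z = 0 ↔ ∃ r, z = blockStart 2 r + 1 := by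
  obtain ⟨r, c, hc, rfl⟩ := exists_blockStart_add 2 z
  rw [exists_blockStart_add_iff hc (by decide), fibSeq_blockStart_add hc]
  have hletters :
      ∀ x : Fin 2, ∀ c < (fibBlock 2 x).length, (fibBlock 2 x).getD c 0 = 0 ↔ c = 1 := by
    decide
  exact hletters _ c hc

end BlockDecomposition

section Mismatches

/-- Every level-`(k + 1)` block starts with `f_{k+1}`; `prefixEnd k r` is the position right after
that prefix in the `r`-th block. -/
def prefixEnd (k r : ℕ) : ℕ := blockStart (k + 1) r + F (k + 1)

def IsNearPrefixEnd (k j : ℕ) : Prop :=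
  (∃ r, j + 1 = prefixEnd k r) ∨ ∃ r, j + 2 = prefixEnd k r

lemma isNearPrefixEnd_blockStart_add_iff {k r c : ℕ} (hk : 1 ≤ k)
    (hc : c < blockLen (k + 1) r) :
    IsNearPrefixEnd k (blockStart (k + 1) r + c) ↔ c + 1 = F (k + 1) ∨ c + 2 = F (k + 1) := by
  have h2 : 2 ≤ F (k + 1) := two_le_F (by omega)
  have hoffset (e : ℕ) (he₁ : 1 ≤ e) (he₂ : e ≤ 2) :
      (∃ r', blockStart (k + 1) r + c + e = prefixEnd k r') ↔ c + e = F (k + 1) := by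
    rw [show c + e = F (k + 1) ↔ c = F (k + 1) - e by omega,
      ← exists_blockStart_add_iff hc (d := F (k + 1) - e) (by omega)]
    refine exists_congr fun r' => ?_
    unfold prefixEnd; omega
  exact or_congr (hoffset 1 le_rfl (by omega)) (hoffset 2 (by omega) le_rfl)

lemma fibSeq_ne_fibSeq_add_F_iff_of_le_two {k : ℕ} (hk₁ : 1 ≤ k) (hk₂ : k ≤ 2) (j : ℕ) :
    fibSeq j ≠ fibSeq (j + F k) ↔ IsNearPrefixEnd k j := by
  obtain ⟨r, c, hc, rfl⟩ := exists_blockStart_add (k + 1) j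
  have hFk : F k ≤ 2 := F_mono hk₂
  rw [isNearPrefixEnd_blockStart_add_iff hk₁ hc, Nat.add_assoc,
    fibSeq_blockStart_add_of_lt_add_two (by omega) (by omega),
    fibSeq_blockStart_add_of_lt_add_two (by omega) (by omega)]
  unfold blockLen at hc
  generalize fibSeq r = x at hc ⊢
  interval_cases k <;> revert c <;> revert x <;> decide

lemma prefixEnd_eq (k r : ℕ) : prefixEnd k r = blockStart k (blockStart 1 r + 1) := by
  rw [prefixEnd, ← blockStart_blockStart, blockStart_succ, blockLen,
    (fibSeq_eq_one_iff _).mpr ⟨r, rfl⟩, length_fibBlock, if_pos rfl]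

lemma prefixEnd_succ_eq (k r : ℕ) : prefixEnd (k + 1) r = blockStart k (blockStart 2 r + 2) := by
  have h₁ : fibSeq (blockStart 2 r) = 1 :=
    (fibSeq_eq_one_iff _).mpr ⟨blockStart 1 r, (blockStart_blockStart 1 1 r).symm⟩
  have h₀ : fibSeq (blockStart 2 r + 1) = 0 := (fibSeq_eq_zero_iff _).mpr ⟨r, rfl⟩
  rw [prefixEnd, ← blockStart_blockStart k 2, blockStart_succ, blockStart_succ, blockLen,
    blockLen, h₁, h₀, length_fibBlock, length_fibBlock, if_pos rfl, if_neg (by decide),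
    F_add_two]
  ring

lemma exists_eq_blockStart_and_not_iff {K v : ℕ} (hv : 1 ≤ v) :
    ((∃ w, v = blockStart K w) ∧ ¬ ∃ r, v = blockStart K (blockStart 1 r + 1)) ↔
      ∃ r, v = blockStart K (blockStart 2 r + 2) := by
  have hinj := (blockStart_strictMono K).injective
  constructor
  · rintro ⟨⟨w, rfl⟩, hnot⟩
    obtain ⟨u, rfl⟩ : ∃ u, w = u + 1 := ⟨w - 1, by
      rcases Nat.eq_zero_or_pos w with rfl | hw
      · simp [blockStart_zero] at hv
      · omega⟩
    have hu : fibSeq u = 0 := by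
      by_contra h
      have h₁ : fibSeq u = 1 := (by decide : ∀ a : Fin 2, a ≠ 0 → a = 1) _ h
      obtain ⟨r, rfl⟩ := (fibSeq_eq_one_iff u).mp h₁
      exact hnot ⟨r, rfl⟩
    obtain ⟨r, rfl⟩ := (fibSeq_eq_zero_iff u).mp hu
    exact ⟨r, rfl⟩
  · rintro ⟨r, rfl⟩
    refine ⟨⟨_, rfl⟩, fun ⟨r', h⟩ => ?_⟩
    have h' : blockStart 2 r + 1 = blockStart 1 r' := by have := hinj h; omega
    have h₀ := (fibSeq_eq_zero_iff _).mpr ⟨r, rfl⟩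
    rw [h', (fibSeq_eq_one_iff _).mpr ⟨r', rfl⟩] at h₀
    exact absurd h₀ (by decide)

lemma not_exists_blockStart_eq_add_one_and_add_two {K j : ℕ} (hK : 2 ≤ K) :
    ¬ ((∃ r, j + 1 = blockStart K r) ∧ ∃ r, j + 2 = blockStart K r) := by
  rintro ⟨⟨a, ha⟩, ⟨b, hb⟩⟩
  have hab : a < b := (blockStart_strictMono K).lt_iff_lt.mp (by omega)
  have := blockStart_add_F_le K hab
  have := two_le_F hK
  omega

lemma fibSeq_ne_fibSeq_add_F_iff_step {k : ℕ} (hk : 1 ≤ k)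
    (ih₀ : ∀ j, fibSeq j ≠ fibSeq (j + F k) ↔ IsNearPrefixEnd k j)
    (ih₁ : ∀ j, fibSeq j ≠ fibSeq (j + F (k + 1)) ↔ IsNearPrefixEnd (k + 1) j) (j : ℕ) :
    fibSeq j ≠ fibSeq (j + F (k + 2)) ↔ IsNearPrefixEnd (k + 2) j := by
  have hxor : fibSeq j ≠ fibSeq (j + F (k + 2)) ↔ (fibSeq j ≠ fibSeq (j + F (k + 1)) ↔
      ¬ fibSeq (j + F (k + 1)) ≠ fibSeq (j + F (k + 1) + F k)) := by
    rw [show j + F (k + 1) + F k = j + F (k + 2) by rw [F_add_two]; ring]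
    generalize fibSeq j = a, fibSeq (j + F (k + 1)) = b, fibSeq (j + F (k + 2)) = c
    revert a b c; decide
  have hshift : IsNearPrefixEnd k (j + F (k + 1)) ↔
      (∃ r, j + 1 = blockStart (k + 1) r) ∨ ∃ r, j + 2 = blockStart (k + 1) r := by
    unfold IsNearPrefixEnd prefixEnd
    exact or_congr (exists_congr fun r => by omega) (exists_congr fun r => by omega)
  have e₁ : ∀ r, prefixEnd (k + 1) r = blockStart (k + 1) (blockStart 1 r + 1) := prefixEnd_eq _
  have e₂ : ∀ r, prefixEnd (k + 2) r = blockStart (k + 1) (blockStart 2 r + 2) :=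
    prefixEnd_succ_eq _
  rw [hxor, ih₁, ih₀, hshift]
  unfold IsNearPrefixEnd
  simp only [e₁, e₂]
  clear ih₀ ih₁ hxor hshift e₁ e₂
  -- `aᵢ`, `bᵢ`, `cᵢ`: `j + i` is a prefix end of level `k + 2`, a block start of level `k + 1`,
  -- a prefix end of level `k + 3`
  have hlogic {a₁ a₂ b₁ b₂ c₁ c₂ : Prop} (i₁ : a₁ → b₁) (i₂ : a₂ → b₂) (hexcl : ¬(b₁ ∧ b₂))
      (h₁ : b₁ ∧ ¬a₁ ↔ c₁) (h₂ : b₂ ∧ ¬a₂ ↔ c₂) : ((a₁ ∨ a₂ ↔ ¬(b₁ ∨ b₂)) ↔ c₁ ∨ c₂) := by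
    tauto
  exact hlogic (fun ⟨_, h⟩ => ⟨_, h⟩) (fun ⟨_, h⟩ => ⟨_, h⟩)
    (not_exists_blockStart_eq_add_one_and_add_two (by omega))
    (exists_eq_blockStart_and_not_iff (by omega)) (exists_eq_blockStart_and_not_iff (by omega))

theorem fibSeq_ne_fibSeq_add_F_iff {k : ℕ} (hk : 1 ≤ k) (j : ℕ) :
    fibSeq j ≠ fibSeq (j + F k) ↔ IsNearPrefixEnd k j := by
  obtain ⟨k, rfl⟩ : ∃ k', k = k' + 1 := ⟨k - 1, by omega⟩
  clear hk
  induction k using Nat.twoStepInduction generalizing j with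
  | zero => exact fibSeq_ne_fibSeq_add_F_iff_of_le_two le_rfl (by omega) j
  | one => exact fibSeq_ne_fibSeq_add_F_iff_of_le_two (by omega) le_rfl j
  | more k ih₁ ih₂ =>
    exact fibSeq_ne_fibSeq_add_F_iff_step (by omega) ih₁ ih₂ j

end Mismatches

section PrefixEnds

lemma prefixEnd_strictMono (k : ℕ) : StrictMono (prefixEnd k) := fun _ _ h => by
  unfold prefixEnd; have := blockStart_strictMono (k + 1) h; omega

lemma prefixEnd_add_F_le (k : ℕ) {a b : ℕ} (hab : a < b) :
    prefixEnd k a + F (k + 1) ≤ prefixEnd k b := by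
  unfold prefixEnd; have := blockStart_add_F_le (k + 1) hab; omega

lemma exists_prefixEnd_mem_Ioc (k x : ℕ) :
    ∃ r, x < prefixEnd k r ∧ prefixEnd k r ≤ x + F (k + 2) := by
  obtain ⟨r, c, hc, rfl⟩ := exists_blockStart_add (k + 1) x
  have : blockLen (k + 1) r ≤ F (k + 2) := blockLen_le (k + 1) r
  have : F (k + 1) ≤ F (k + 2) := F_mono (by omega)
  by_cases h : c < F (k + 1)
  · exact ⟨r, by unfold prefixEnd; omega, by unfold prefixEnd; omega⟩
  · exact ⟨r + 1, by unfold prefixEnd; rw [blockStart_succ]; omega,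
      by unfold prefixEnd; rw [blockStart_succ]; omega⟩

lemma exists_isNearPrefixEnd_mem {k : ℕ} (hk : 1 ≤ k) (x : ℕ) :
    ∃ j, x ≤ j ∧ j + 1 < x + F (k + 2) ∧ IsNearPrefixEnd k j := by
  obtain ⟨r, h₁, h₂⟩ := exists_prefixEnd_mem_Ioc k x
  have := two_le_F (show 2 ≤ k + 1 by omega)
  have : F (k + 2) = F (k + 1) + F k := F_add_two k
  have := F_pos k
  by_cases hx : prefixEnd k r = x + 1
  · exact ⟨x, le_rfl, by omega, Or.inl ⟨r, hx.symm⟩⟩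
  · exact ⟨prefixEnd k r - 2, by omega, by omega, Or.inr ⟨r, by omega⟩⟩

lemma add_F_le_of_isNearPrefixEnd {k j j' : ℕ} (h : IsNearPrefixEnd k j)
    (h' : IsNearPrefixEnd k j') (hjj' : j + 2 ≤ j') : j + F (k + 1) ≤ j' + 1 := by
  obtain ⟨a, ha⟩ : ∃ a, j + 1 ≤ prefixEnd k a ∧ prefixEnd k a ≤ j + 2 := by
    rcases h with ⟨a, ha⟩ | ⟨a, ha⟩ <;> exact ⟨a, by omega, by omega⟩
  obtain ⟨b, hb⟩ : ∃ b, j' + 1 ≤ prefixEnd k b ∧ prefixEnd k b ≤ j' + 2 := by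
    rcases h' with ⟨b, hb⟩ | ⟨b, hb⟩ <;> exact ⟨b, by omega, by omega⟩
  have hab : a < b := (prefixEnd_strictMono k).lt_iff_lt.mp (by omega)
  have := prefixEnd_add_F_le k hab
  omega

lemma exists_prefixEnd_eq_add_two {k j : ℕ} (hk : 2 ≤ k) (h : IsNearPrefixEnd k j)
    (h' : IsNearPrefixEnd k (j + 1)) : ∃ r, j + 2 = prefixEnd k r := by
  refine h.resolve_left fun ⟨a, ha⟩ => ?_
  obtain ⟨b, hb⟩ : ∃ b, j + 2 ≤ prefixEnd k b ∧ prefixEnd k b ≤ j + 3 := by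
    rcases h' with ⟨b, hb⟩ | ⟨b, hb⟩ <;> exact ⟨b, by omega, by omega⟩
  have hab : a < b := (prefixEnd_strictMono k).lt_iff_lt.mp (by omega)
  have := prefixEnd_add_F_le k hab
  have : 3 ≤ F (k + 1) := F_mono (show 3 ≤ k + 1 by omega)
  omega

/-- `prefixEnd (k + 2) b + F (k + 2)` lies `F k` after the start of a level-`(k + 1)` block, so
strictly inside it. -/
lemma prefixEnd_ne_prefixEnd_add_two_add_F {k : ℕ} (hk : 1 ≤ k) (a b : ℕ) :
    prefixEnd k a ≠ prefixEnd (k + 2) b + F (k + 2) := by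
  intro h
  rw [prefixEnd_succ_eq, prefixEnd, F_add_two] at h
  have hlt : F k < blockLen (k + 1) (blockStart 2 b + 2) :=
    (F_lt_F hk (by omega)).trans_le (F_le_blockLen _ _)
  have hpos : 0 < blockLen (k + 1) a := (F_pos _).trans_le (F_le_blockLen _ _)
  obtain rfl := eq_of_blockStart_add_eq hpos hlt (by omega : blockStart (k + 1) a + 0 = _ + F k)
  have := F_pos k
  omega

end PrefixEnds

section Squares

variable {K m i : ℕ}

lemma isNearPrefixEnd_iff_of_square (hK : 1 ≤ K)
    (hsq : ∀ c < F K + m, fibSeq (i + c) = fibSeq (i + c + (F K + m))) {c : ℕ}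
    (hc : c < F K + m) :
    IsNearPrefixEnd K (i + c) ↔ fibSeq (i + F K + c) ≠ fibSeq (i + F K + c + m) := by
  rw [← fibSeq_ne_fibSeq_add_F_iff hK, hsq c hc, ne_comm, show i + c + F K = i + F K + c by ring,
    show i + c + (F K + m) = i + F K + c + m by ring]

lemma false_of_square_of_mismatches (hK : 1 ≤ K) (hlt : F K + m < F (K + 1))
    (hsq : ∀ c < F K + m, fibSeq (i + c) = fibSeq (i + c + (F K + m))) {c₁ c₂ : ℕ}
    (h₁₂ : c₁ + 2 ≤ c₂) (hc₂ : c₂ < F K + m)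
    (h₁ : fibSeq (i + F K + c₁) ≠ fibSeq (i + F K + c₁ + m))
    (h₂ : fibSeq (i + F K + c₂) ≠ fibSeq (i + F K + c₂ + m)) : False := by
  have := add_F_le_of_isNearPrefixEnd ((isNearPrefixEnd_iff_of_square hK hsq (by omega)).mpr h₁)
    ((isNearPrefixEnd_iff_of_square hK hsq hc₂).mpr h₂) (by omega : i + c₁ + 2 ≤ i + c₂)
  omega

lemma false_of_square_of_forall_mismatch (hK : 1 ≤ K) (hlt : F K + m < F (K + 1))
    (hsq : ∀ c < F K + m, fibSeq (i + c) = fibSeq (i + c + (F K + m)))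
    (hm : ∀ x, ∃ c < m, fibSeq (x + c) ≠ fibSeq (x + c + m)) : False := by
  have := hlt.trans_le (F_succ_le_two_mul K)
  obtain ⟨c₁, hc₁, h₁⟩ := hm (i + F K)
  obtain ⟨c₂, hc₂, h₂⟩ := hm (i + F K + F K)
  exact false_of_square_of_mismatches hK hlt hsq (c₂ := F K + c₂) (by omega) (by omega) h₁
    (by simpa only [Nat.add_assoc] using h₂)

lemma false_of_square_F_add_F_of_add_three_le {κ : ℕ} (hκ : 1 ≤ κ) (hκK : κ + 3 ≤ K)
    (hlt : F K + F κ < F (K + 1))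
    (hsq : ∀ c < F K + F κ, fibSeq (i + c) = fibSeq (i + c + (F K + F κ))) : False := by
  have hwide : 2 * F (κ + 2) ≤ F K + F κ := by
    have : F (κ + 3) ≤ F K := F_mono hκK
    rw [F_add_two (κ + 1), F_add_two κ] at this
    rw [F_add_two κ]; omega
  obtain ⟨j₁, hj₁, hj₁', h₁⟩ := exists_isNearPrefixEnd_mem hκ (i + F K)
  obtain ⟨j₂, hj₂, hj₂', h₂⟩ :=
    exists_isNearPrefixEnd_mem hκ (i + F K + (F K + F κ) + 1 - F (κ + 2))
  obtain ⟨c₁, rfl⟩ : ∃ c, j₁ = i + F K + c := ⟨j₁ - (i + F K), by omega⟩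
  obtain ⟨c₂, rfl⟩ : ∃ c, j₂ = i + F K + c := ⟨j₂ - (i + F K), by omega⟩
  rw [← fibSeq_ne_fibSeq_add_F_iff hκ] at h₁ h₂
  exact false_of_square_of_mismatches (by omega) hlt hsq (by omega) (by omega) h₁ h₂

lemma false_of_square_F_add_two_add_F {k : ℕ} (hk : 1 ≤ k)
    (hsq : ∀ c < F (k + 2) + F k, fibSeq (i + c) = fibSeq (i + c + (F (k + 2) + F k))) :
    False := by
  obtain ⟨a, ha₁, ha₂⟩ := exists_prefixEnd_mem_Ioc k (i + F (k + 2) + 1)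
  obtain ⟨c, hc⟩ : ∃ c, prefixEnd k a = i + F (k + 2) + c + 2 :=
    ⟨prefixEnd k a - (i + F (k + 2)) - 2, by omega⟩
  have := F_pos k
  have hnear (d : ℕ) (hd : d ≤ 1) : IsNearPrefixEnd (k + 2) (i + (c + d)) := by
    rw [isNearPrefixEnd_iff_of_square (by omega) hsq (by omega), fibSeq_ne_fibSeq_add_F_iff hk]
    interval_cases d
    · exact Or.inr ⟨a, by omega⟩
    · exact Or.inl ⟨a, by omega⟩
  obtain ⟨b, hb⟩ := exists_prefixEnd_eq_add_two (by omega) (hnear 0 (by omega))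
    (by simpa only [Nat.add_assoc] using hnear 1 le_rfl)
  exact prefixEnd_ne_prefixEnd_add_two_add_F hk a b (by omega)

theorem exists_F_eq_of_square {l : ℕ} (hl : 1 ≤ l) {i : ℕ}
    (hsq : ∀ c < l, fibSeq (i + c) = fibSeq (i + c + l)) : ∃ a, F a = l := by
  induction l using Nat.strong_induction_on generalizing i with
  | _ l ih =>
  by_contra hnF
  obtain ⟨K, hK₁, hK₂⟩ := exists_F_le_lt_F_succ hl
  have hK : 1 ≤ K := Nat.pos_of_ne_zero fun h => by
    subst h; exact absurd hK₂ (by simp [F]; omega)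
  obtain ⟨m, rfl⟩ : ∃ m, l = F K + m := ⟨l - F K, by omega⟩
  have hm : 1 ≤ m := Nat.pos_of_ne_zero fun h => hnF ⟨K, by omega⟩
  by_cases hmF : ∃ a, F a = m
  · obtain ⟨κ, hκ, rfl⟩ := exists_one_le_F_eq hmF
    have hκK : κ + 2 ≤ K := by
      by_contra h
      have : F (K - 1) ≤ F κ := F_mono (by omega)
      have := F_eq_add_of_two_le (K + 1) (by omega)
      simp only [Nat.add_sub_cancel, show K + 1 - 2 = K - 1 by omega] at this
      omega
    rcases Nat.lt_or_ge (κ + 2) K with h | h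
    · exact false_of_square_F_add_F_of_add_three_le hκ h hK₂ hsq
    · obtain rfl : K = κ + 2 := by omega
      exact false_of_square_F_add_two_add_F hκ hsq
  · refine false_of_square_of_forall_mismatch hK hK₂ hsq fun x => ?_
    by_contra hx
    push Not at hx
    exact hmF (ih m (by have := F_pos K; omega) hm hx)

end Squares

section Counting

lemma F_add_one_le_prefixEnd {k : ℕ} (hk : 1 ≤ k) (r : ℕ) : F k + 1 ≤ prefixEnd k r := by
  unfold prefixEnd; have := F_lt_F hk k.lt_add_one; omega

lemma prefixEnd_F_sub_one_add (k : ℕ) {m : ℕ} (hm : 1 ≤ m) :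
    prefixEnd k (F m - 1) + (if Even m then 0 else F k) = F (m + k + 1) := by
  have hlast := blockStart_succ (k + 1) (F m - 1)
  rw [Nat.sub_add_cancel (F_pos m), blockStart_F _ hm, ← Nat.add_assoc, blockLen, length_fibBlock,
    fibSeq_F_sub_one hm] at hlast
  unfold prefixEnd
  have : F (k + 1 + 1) = F (k + 1) + F k := F_add_two k
  by_cases he : Even m <;> simp [he] at hlast ⊢ <;> omega

lemma prefixEnd_add_F_le_of_add_two_le {k m r : ℕ} (hr : r + 2 ≤ F m) :
    prefixEnd k r + F (k + 2) ≤ F (m + k + 1) := by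
  have hm : 2 ≤ m := by
    by_contra h; interval_cases m <;> simp [F] at hr
  have hlast := blockStart_succ (k + 1) (F m - 1)
  have hprev := blockStart_succ (k + 1) (F m - 2)
  have hmono := (blockStart_strictMono (k + 1)).monotone (show r ≤ F m - 2 by omega)
  rw [Nat.sub_add_cancel (F_pos m), blockStart_F _ (by omega), ← Nat.add_assoc, blockLen,
    length_fibBlock, fibSeq_F_sub_one (by omega)] at hlast
  rw [show F m - 2 + 1 = F m - 1 by omega, blockLen, length_fibBlock, fibSeq_F_sub_two hm] at hprev
  unfold prefixEnd
  have : F (k + 1 + 1) = F (k + 1) + F k := F_add_two k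
  have := F_add_two k
  by_cases he : Even m <;> simp [he] at hlast hprev <;> omega

/-- The starts `i ≤ E` of the windows `[i, i + F k)` that contain `prefixEnd k r - 2` or
`prefixEnd k r - 1`. -/
def hitStarts (k E r : ℕ) : Finset ℕ :=
  (range (E + 1)).filter fun i => i + 1 ≤ prefixEnd k r ∧ prefixEnd k r ≤ i + F k + 1

lemma card_hitStarts (k E r : ℕ) :
    (hitStarts k E r).card = min (prefixEnd k r - 1) E + 1 - (prefixEnd k r - (F k + 1)) := by
  have : hitStarts k E r = Icc (prefixEnd k r - (F k + 1)) (min (prefixEnd k r - 1) E) := by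
    ext i
    simp only [hitStarts, mem_filter, mem_range, mem_Icc, le_min_iff]
    have : F (k + 1) ≤ prefixEnd k r := Nat.le_add_left _ _
    have := F_pos (k + 1)
    omega
  rw [this, Nat.card_Icc]

lemma exists_mismatch_iff_exists_prefixEnd {k : ℕ} (hk : 1 ≤ k) (i : ℕ) :
    (∃ c < F k, fibSeq (i + c) ≠ fibSeq (i + c + F k)) ↔
      ∃ r, i + 1 ≤ prefixEnd k r ∧ prefixEnd k r ≤ i + F k + 1 := by
  simp only [fibSeq_ne_fibSeq_add_F_iff hk]
  constructor
  · rintro ⟨c, hc, ⟨r, hr⟩ | ⟨r, hr⟩⟩ <;> exact ⟨r, by omega, by omega⟩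
  · rintro ⟨r, h₁, h₂⟩
    by_cases h : prefixEnd k r = i + 1
    · exact ⟨0, F_pos k, Or.inl ⟨r, by omega⟩⟩
    · exact ⟨prefixEnd k r - 2 - i, by omega, Or.inr ⟨r, by omega⟩⟩

lemma filter_exists_mismatch_eq_biUnion {k m E : ℕ} (hk : 1 ≤ k) (hm : 1 ≤ m)
    (hE : E < F (m + k + 1)) :
    (range (E + 1)).filter (fun i => ∃ c < F k, fibSeq (i + c) ≠ fibSeq (i + c + F k)) =
      (range (F m)).biUnion (hitStarts k E) := by
  have htop : prefixEnd k (F m) = F (m + k + 1) + F (k + 1) := by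
    rw [prefixEnd, blockStart_F _ hm, Nat.add_assoc]
  have := F_lt_F hk k.lt_add_one
  ext i
  simp only [mem_filter, mem_biUnion, mem_range, hitStarts, exists_mismatch_iff_exists_prefixEnd hk]
  constructor
  · rintro ⟨hi, r, hr⟩
    refine ⟨r, ?_, hi, hr⟩
    by_contra h
    have := (prefixEnd_strictMono k).monotone (not_lt.mp h)
    omega
  · rintro ⟨r, -, hi, hr⟩
    exact ⟨hi, r, hr⟩

lemma pairwiseDisjoint_hitStarts {k : ℕ} (hk : 1 ≤ k) (E : ℕ) (s : Set ℕ) :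
    s.PairwiseDisjoint (hitStarts k E) := by
  have hsep {a b : ℕ} (hab : a < b) : Disjoint (hitStarts k E a) (hitStarts k E b) := by
    rw [disjoint_left]
    intro i hia hib
    simp only [hitStarts, mem_filter] at hia hib
    have := prefixEnd_add_F_le k hab
    have := F_lt_F hk k.lt_add_one
    omega
  intro a _ b _ hab
  rcases Nat.lt_or_gt_of_ne hab with h | h
  exacts [hsep h, (hsep h).symm]

/-- The number of windows hitting the last prefix end of `f_{m+k+1}`, which is cut off by the
end of the word. -/
def tailCount (m k : ℕ) : ℕ := if Even m then (if k = 1 then 1 else 0) else 2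

lemma card_filter_exists_mismatch {k m : ℕ} (hk : 1 ≤ k) (hm : 1 ≤ m) :
    ((range (F (m + k + 1) - 2 * F k + 1)).filter
        fun i => ∃ c < F k, fibSeq (i + c) ≠ fibSeq (i + c + F k)).card =
      (F m - 1) * (F k + 1) + tailCount m k := by
  have h₁ := F_lt_F hk k.lt_add_one
  have h₂ := F_add_two k
  have := F_pos k
  have hN : F (k + 2) ≤ F (m + k + 1) := F_mono (by omega)
  obtain ⟨M, hM⟩ : ∃ M, F m = M + 1 := ⟨F m - 1, (Nat.sub_add_cancel (F_pos m)).symm⟩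
  rw [filter_exists_mismatch_eq_biUnion hk hm (by omega),
    card_biUnion (pairwiseDisjoint_hitStarts hk _ _), hM, sum_range_succ, Nat.add_sub_cancel]
  have hfull : ∀ r ∈ range M, (hitStarts k (F (m + k + 1) - 2 * F k) r).card = F k + 1 := by
    intro r hr
    rw [card_hitStarts]
    have := prefixEnd_add_F_le_of_add_two_le (k := k) (show r + 2 ≤ F m by simp at hr; omega)
    have := F_add_one_le_prefixEnd hk r
    omega
  rw [sum_congr rfl hfull, sum_const, card_range, smul_eq_mul, card_hitStarts]
  congr 1
  have hlast := prefixEnd_F_sub_one_add k hm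
  rw [hM, Nat.add_sub_cancel] at hlast
  have := F_add_one_le_prefixEnd hk M
  unfold tailCount
  split_ifs at hlast ⊢ with hmeven hk₁
  · subst hk₁; have : F 1 = 1 := rfl; omega
  · have := two_le_F (show 2 ≤ k by omega); omega
  · omega

def squareStarts (n k : ℕ) : Finset ℕ :=
  (range (F n - 2 * F k + 1)).filter fun i => ∀ c < F k, fibSeq (i + c) = fibSeq (i + c + F k)

lemma card_squareStarts_add {k m : ℕ} (hk : 1 ≤ k) (hm : 1 ≤ m) :
    (squareStarts (m + k + 1) k).card + ((F m - 1) * (F k + 1) + tailCount m k) =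
      F (m + k + 1) - 2 * F k + 1 := by
  have hsplit := card_filter_add_card_filter_not (s := range (F (m + k + 1) - 2 * F k + 1))
    (p := fun i => ∀ c < F k, fibSeq (i + c) = fibSeq (i + c + F k))
  simp only [not_forall, exists_prop, card_range] at hsplit
  rw [← hsplit, ← card_filter_exists_mismatch hk hm, squareStarts]

theorem R_eq_sum_card_squareStarts {n : ℕ} (hn : 3 ≤ n) :
    R n = ∑ k ∈ Icc 1 (n - 2), (squareStarts n k).card := by
  have hsq {i l : ℕ} (hl : i + 2 * l ≤ F n) :
      (∀ t < l, (fibWord n).getD (i + t) 0 = (fibWord n).getD (i + l + t) 0) ↔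
        ∀ t < l, fibSeq (i + t) = fibSeq (i + t + l) := by
    refine forall₂_congr fun t ht => ?_
    rw [getD_fibWord (by omega) (by omega), getD_fibWord (by omega) (by omega), Nat.add_right_comm]
  have hset : {p : ℕ × ℕ | 1 ≤ p.2 ∧ p.1 + 2 * p.2 ≤ (fibWord n).length ∧
      ∀ t < p.2, (fibWord n).getD (p.1 + t) 0 = (fibWord n).getD (p.1 + p.2 + t) 0} =
      ↑((Icc 1 (n - 2)).biUnion fun k => (squareStarts n k).image fun i => (i, F k)) := by
    ext ⟨i, l⟩
    simp only [Set.mem_ofPred_eq, coe_biUnion, Set.mem_iUnion, mem_coe, mem_image, mem_Icc,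
      length_fibWord, squareStarts, mem_filter, mem_range, Prod.mk.injEq, exists_prop]
    constructor
    · rintro ⟨hl, hlen, h⟩
      rw [hsq hlen] at h
      obtain ⟨k, hk, rfl⟩ := exists_one_le_F_eq (exists_F_eq_of_square hl h)
      exact ⟨k, ⟨hk, (two_mul_F_le_iff hn).mp (by omega)⟩, i, ⟨by omega, h⟩, rfl, rfl⟩
    · rintro ⟨k, ⟨hk, hkn⟩, i, ⟨hi, h⟩, rfl, rfl⟩
      have := (two_mul_F_le_iff hn).mpr hkn
      exact ⟨F_pos k, by omega, (hsq (by omega)).mpr h⟩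
  rw [R, hset, Set.ncard_coe_finset, card_biUnion]
  · exact sum_congr rfl fun k _ => card_image_of_injective _ fun a b h => congrArg Prod.fst h
  · intro a ha b hb hab
    simp only [coe_Icc, Set.mem_Icc] at ha hb
    refine disjoint_left.mpr fun p hpa hpb => hab (eq_of_F_eq ha.1 hb.1 ?_)
    simp only [mem_image] at hpa hpb
    obtain ⟨_, _, rfl⟩ := hpa
    obtain ⟨_, _, h⟩ := hpb
    exact (congrArg Prod.snd h).symm

lemma card_squareStarts_eq {n k : ℕ} (hk : 1 ≤ k) (hkn : k ≤ n - 2) :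
    ((squareStarts n k).card : ℤ) =
      F n + 2 - F k - F (n - 1 - k) * F k - F (n - 1 - k) - tailCount (n - 1 - k) k := by
  obtain ⟨m, rfl⟩ : ∃ m, n = m + k + 1 := ⟨n - 1 - k, by omega⟩
  have hm : 1 ≤ m := by omega
  have h := card_squareStarts_add hk hm
  have hF := (two_mul_F_le_iff (show 3 ≤ m + k + 1 by omega)).mpr hkn
  rw [show m + k + 1 - 1 - k = m by omega]
  zify [F_pos m, hF] at h
  linear_combination h

end Counting

section Sums

lemma sum_Icc_F_add_two {n : ℕ} (hn : 2 ≤ n) : ∑ k ∈ Icc 1 (n - 2), F k + 2 = F n := by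
  induction n, hn using Nat.le_induction with
  | base => rfl
  | succ n hn ih =>
    rw [show n + 1 - 2 = n - 2 + 1 by omega, sum_Icc_succ_top (by omega),
      F_eq_add_of_two_le (n + 1) (by omega),
      show n - 2 + 1 = n + 1 - 2 by omega, Nat.add_sub_cancel, ← ih]
    ring

lemma sum_Icc_F_sub_eq (n : ℕ) :
    ∑ k ∈ Icc 1 (n - 2), F (n - 1 - k) = ∑ k ∈ Icc 1 (n - 2), F k := by
  refine sum_nbij' (n - 1 - ·) (n - 1 - ·) ?_ ?_ ?_ ?_ ?_ <;> intro k hk <;>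
    simp only [mem_Icc] at hk ⊢ <;> omega

def fibConv (n : ℕ) : ℕ := ∑ k ∈ Icc 1 (n - 2), F (n - 1 - k) * F k

lemma fibConv_succ {n : ℕ} (hn : 3 ≤ n) :
    fibConv (n + 1) = fibConv n + fibConv (n - 1) + F n := by
  have hshift : ∑ k ∈ Icc 1 (n - 2), F (n - 2 - k) * F k = fibConv (n - 1) + F (n - 2) := by
    have htop := sum_Icc_succ_top (a := 1) (b := n - 3) (by omega) fun k => F (n - 2 - k) * F k
    rw [show n - 3 + 1 = n - 2 by omega, Nat.sub_self] at htop
    rw [htop, fibConv, show n - 1 - 2 = n - 3 by omega, show n - 1 - 1 = n - 2 by omega]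
    simp only [show F 0 = 1 from rfl, one_mul]
  have hsplit : ∀ k ∈ Icc 1 (n - 2), F (n + 1 - 1 - k) * F k =
      F (n - 1 - k) * F k + F (n - 2 - k) * F k := by
    intro k hk
    rw [mem_Icc] at hk
    rw [← add_mul, show n + 1 - 1 - k = n - k by omega, F_eq_add_of_two_le (n - k) (by omega),
      show n - k - 1 = n - 1 - k by omega, show n - k - 2 = n - 2 - k by omega]
  rw [fibConv, show n + 1 - 2 = n - 2 + 1 by omega, sum_Icc_succ_top (by omega),
    sum_congr rfl hsplit, sum_add_distrib, hshift, show n + 1 - 1 - (n - 2 + 1) = 1 by omega,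
    show n - 2 + 1 = n - 1 by omega,
    ← fibConv, F_eq_add_of_two_le n (by omega)]
  simp only [show F 1 = 1 from rfl, one_mul]
  ring

lemma five_mul_fibConv {n : ℕ} (hn : 3 ≤ n) :
    5 * fibConv n + 8 * F (n - 1) = n * F n + 2 * n * F (n - 1) := by
  suffices h : 5 * fibConv n + 8 * F (n - 1) = n * F n + 2 * n * F (n - 1) ∧
      5 * fibConv (n + 1) + 8 * F n = (n + 1) * F (n + 1) + 2 * (n + 1) * F n from h.1
  induction n, hn using Nat.le_induction with
  | base => decide
  | succ n hn ih =>
    refine ⟨by simpa using ih.2, ?_⟩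
    rw [fibConv_succ (by omega), Nat.add_sub_cancel]
    have := F_eq_add_of_two_le (n + 1) (by omega)
    rw [Nat.add_sub_cancel, show n + 1 - 2 = n - 1 by omega] at this
    have h₂ := F_add_two n
    nlinarith [ih.1, ih.2]

lemma tailCount_add_two (m k : ℕ) : tailCount (m + 2) k = tailCount m k := by
  simp [tailCount, Nat.even_add]

lemma sum_tailCount_add_one {n : ℕ} (hn : 3 ≤ n) :
    ∑ k ∈ Icc 1 (n - 2), tailCount (n - 1 - k) k + 1 = n := by
  induction n using Nat.strong_induction_on with
  | _ n ih =>
  rcases Nat.lt_or_ge n 5 with h | h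
  · interval_cases n <;> decide
  · have hcongr :
        ∀ k ∈ Icc 1 (n - 4), tailCount (n - 1 - k) k = tailCount (n - 2 - 1 - k) k := by
      intro k hk
      rw [mem_Icc] at hk
      rw [show n - 1 - k = n - 2 - 1 - k + 2 by omega, tailCount_add_two]
    rw [show n - 2 = n - 4 + 1 + 1 by omega, sum_Icc_succ_top (by omega),
      sum_Icc_succ_top (by omega), sum_congr rfl hcongr, show n - 4 = n - 2 - 2 by omega,
      show n - 1 - (n - 2 - 2 + 1) = 2 by omega,
      show n - 1 - (n - 2 - 2 + 1 + 1) = 1 by omega]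
    have := ih (n - 2) (by omega) (by omega)
    have h₂ : tailCount 2 (n - 2 - 2 + 1) = 0 := by simp [tailCount]; omega
    have h₁ : tailCount 1 (n - 2 - 2 + 1 + 1) = 2 := by simp [tailCount]
    omega

end Sums

end FibonacciSquares

open FibonacciSquares Finset

/-- for n ≥ 3,
5·R(n) = 4nF(n) − 2(n+6)F(n−1) − 20F(n−2) + 5(n+1) (as integers). -/
theorem stmt17 (n : ℕ) (hn : 3 ≤ n) :
    (5 * R n : ℤ) =
      4 * n * F n - 2 * (n + 6) * F (n - 1) - 20 * F (n - 2) + 5 * (n + 1) := by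
  have hR : (R n : ℤ) = ∑ k ∈ Icc 1 (n - 2), ((F n : ℤ) + 2 - F k - F (n - 1 - k) * F k -
      F (n - 1 - k) - tailCount (n - 1 - k) k) := by
    rw [R_eq_sum_card_squareStarts hn]
    push_cast
    exact sum_congr rfl fun k hk => card_squareStarts_eq (mem_Icc.mp hk).1 (mem_Icc.mp hk).2
  simp only [sum_sub_distrib, sum_add_distrib, sum_const, Nat.card_Icc, nsmul_eq_mul] at hR
  have hF : (∑ k ∈ Icc 1 (n - 2), (F k : ℤ)) + 2 = F n := by
    exact_mod_cast sum_Icc_F_add_two (by omega)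
  have hF' :
      ∑ k ∈ Icc 1 (n - 2), (F (n - 1 - k) : ℤ) = ∑ k ∈ Icc 1 (n - 2), (F k : ℤ) := by
    exact_mod_cast sum_Icc_F_sub_eq n
  have hC : 5 * ∑ k ∈ Icc 1 (n - 2), (F (n - 1 - k) * F k : ℤ) + 8 * F (n - 1) =
      n * F n + 2 * n * F (n - 1) := by exact_mod_cast five_mul_fibConv hn
  have hT : ∑ k ∈ Icc 1 (n - 2), (tailCount (n - 1 - k) k : ℤ) + 1 = n := by
    exact_mod_cast sum_tailCount_add_one hn
  have hsplit : (F n : ℤ) = F (n - 1) + F (n - 2) := by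
    exact_mod_cast F_eq_add_of_two_le n (by omega)
  rw [show ((n - 2 + 1 - 1 : ℕ) : ℤ) = n - 2 by omega] at hR
  linear_combination 5 * hR - hC - 5 * hF' - 10 * hF - 5 * hT - 20 * hsplit
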